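/- Under the stated assumptions, for every ε > 0 and every X ∈ E, if k ≥ 2C/ε then φ(X_k) − φ(X) ≤ ε; that is, GCG outputs an ε-approximate solution (in function value) in at most O(1/ε) steps. -/

import Mathlib

/-!
At step `k`, the line-search bound with `θ = η_k ‖X‖_r` compares `X_k` with the point
`(1 - η_k) X_{k-1} + η_k ‖X‖_r Z_k`. By optimality of `Z_k` on the unit ball and convexity of `f`,
`⟪‖X‖_r Z_k - X_{k-1}, ∇f(X_{k-1})⟫ ≤ f(X) - f(X_{k-1})`, and the smoothness assumption then gives
the Frank–Wolfe recursion `e_k ≤ (1 - η_k) e_{k-1} + η_k² C / 2` for the gap `e_k = φ(X_k) - φ(X)`.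
Induction turns it into `e_k ≤ 2C / (k + 1)`.
-/

open RealInnerProductSpace

section
variable {E : Type*} [NormedAddCommGroup E] [InnerProductSpace ℝ E]

theorem ConvexOn.inner_sub_le_of_hasGradientAt [CompleteSpace E] {f : E → ℝ} {g A : E}
    (hf : ConvexOn ℝ Set.univ f) (hg : HasGradientAt f g A) (B : E) :
    ⟪B - A, g⟫ ≤ f B - f A := by
  let ℓ : ℝ →ᵃ[ℝ] E := AffineMap.lineMap A B
  have hfℓ : HasFDerivAt f (InnerProductSpace.toDual ℝ E g) (ℓ 0) := by
    simpa [ℓ] using hg.hasFDerivAt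
  have hline : HasDerivAt (f ∘ ℓ) ⟪g, B - A⟫ 0 := by
    simpa using hfℓ.comp_hasDerivAt 0 (AffineMap.hasDerivAt_lineMap (a := A) (b := B))
  have := (hf.comp_affineMap ℓ).le_slope_of_hasDerivAt
    (Set.mem_univ 0) (Set.mem_univ 1) zero_lt_one hline
  simpa [ℓ, slope_def_field, real_inner_comm] using this

theorem Seminorm.inner_smul_le_of_forall_unitBall_le (p : Seminorm ℝ E) (hp : ∀ x, p x = 0 → x = 0)
    {Z g : E} (hZ : ∀ W, p W ≤ 1 → ⟪Z, g⟫ ≤ ⟪W, g⟫) (W : E) : ⟪p W • Z, g⟫ ≤ ⟪W, g⟫ := by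
  rcases (apply_nonneg p W).eq_or_lt with hW | hW
  · rw [← hW, hp W hW.symm, zero_smul]
  · have hunit : p ((p W)⁻¹ • W) ≤ 1 := by
      rw [map_smul_eq_mul, Real.norm_eq_abs, abs_of_pos (inv_pos.mpr hW), inv_mul_cancel₀ hW.ne']
    calc ⟪p W • Z, g⟫ = p W * ⟪Z, g⟫ := real_inner_smul_left _ _ _
      _ ≤ p W * ⟪(p W)⁻¹ • W, g⟫ := by gcongr; exact hZ _ hunit
      _ = ⟪W, g⟫ := by rw [real_inner_smul_left, mul_inv_cancel_left₀ hW.ne']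

theorem gcg_step_bound [CompleteSpace E] {f : E → ℝ} {g A Z Y Xc : E} {φ : E → ℝ}
    (nr ns : Seminorm ℝ E) (hnr : ∀ x, nr x = 0 → x = 0) {μ L κ R η : ℝ}
    (hf : ConvexOn ℝ Set.univ f) (hg : HasGradientAt f g A) (hL : 0 ≤ L) (hη : 0 ≤ η)
    (hφ : ∀ Y, φ Y = f Y + μ * nr Y)
    (hsmooth : ∀ B, f ((1 - η) • A + η • B) ≤ f A + η * ⟪B - A, g⟫ + L * η ^ 2 / 2 * ns (B - A) ^ 2)
    (hZ : ∀ W, nr W ≤ 1 → ⟪Z, g⟫ ≤ ⟪W, g⟫) (hZκ : ns Z ≤ κ) (hA : ns A ≤ R)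
    (hY : φ Y ≤ f ((1 - η) • A + (η * nr Xc) • Z) + μ * (1 - η) * nr A + μ * (η * nr Xc)) :
    φ Y - φ Xc ≤ (1 - η) * (φ A - φ Xc) + η ^ 2 * (L * (κ * nr Xc + R) ^ 2) / 2 := by
  set B := nr Xc • Z
  have hdescent : ⟪B - A, g⟫ ≤ f Xc - f A := by
    have := hf.inner_sub_le_of_hasGradientAt hg Xc
    rw [inner_sub_left] at this ⊢
    linarith [nr.inner_smul_le_of_forall_unitBall_le hnr hZ Xc]
  have hdist : ns (B - A) ≤ κ * nr Xc + R := by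
    calc ns (B - A) ≤ ns B + ns A := map_sub_le_add ns B A
      _ = nr Xc * ns Z + ns A := by
        rw [map_smul_eq_mul, Real.norm_eq_abs, abs_of_nonneg (apply_nonneg nr Xc)]
      _ ≤ nr Xc * κ + R := by gcongr
      _ = κ * nr Xc + R := by ring
  have hquad : L * η ^ 2 / 2 * ns (B - A) ^ 2 ≤ L * η ^ 2 / 2 * (κ * nr Xc + R) ^ 2 := by
    gcongr
  rw [mul_smul] at hY
  have hsmoothB := hsmooth B
  simp only [hφ] at hY ⊢
  linarith [mul_le_mul_of_nonneg_left hdescent hη]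

end

theorem le_two_mul_div_of_frankWolfe_recursion {e : ℕ → ℝ} {C : ℝ} (hC : 0 ≤ C) (h1 : e 1 ≤ C)
    (hrec : ∀ k : ℕ, 2 ≤ k →
      e k ≤ (1 - 2 / ((k : ℝ) + 1)) * e (k - 1) + (2 / ((k : ℝ) + 1)) ^ 2 * C / 2) :
    ∀ k : ℕ, 1 ≤ k → e k ≤ 2 * C / ((k : ℝ) + 1) := by
  intro k hk
  induction k, hk using Nat.le_induction with
  | base => norm_num [h1]
  | succ n hn ih =>
    have hn' : (1 : ℝ) ≤ n := by exact_mod_cast hn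
    have hcoef : 0 ≤ 1 - 2 / ((n : ℝ) + 1 + 1) := by
      rw [sub_nonneg, div_le_one (by positivity)]; linarith
    have hstep := hrec (n + 1) (by omega)
    simp only [Nat.add_sub_cancel, Nat.cast_add, Nat.cast_one] at hstep ⊢
    calc e (n + 1)
        ≤ (1 - 2 / ((n : ℝ) + 1 + 1)) * e n + (2 / ((n : ℝ) + 1 + 1)) ^ 2 * C / 2 := hstep
      _ ≤ (1 - 2 / ((n : ℝ) + 1 + 1)) * (2 * C / ((n : ℝ) + 1))
          + (2 / ((n : ℝ) + 1 + 1)) ^ 2 * C / 2 := by gcongr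
      _ ≤ 2 * C / ((n : ℝ) + 1 + 1) := by
        rw [← sub_nonneg]
        have hgap : 2 * C / ((n : ℝ) + 1 + 1)
            - ((1 - 2 / ((n : ℝ) + 1 + 1)) * (2 * C / ((n : ℝ) + 1))
              + (2 / ((n : ℝ) + 1 + 1)) ^ 2 * C / 2)
            = 2 * C / (((n : ℝ) + 1) * ((n : ℝ) + 1 + 1) ^ 2) := by
          field_simp; ring
        rw [hgap]; positivity

theorem gcg_eps_approximate_general
    {E : Type*} [NormedAddCommGroup E] [InnerProductSpace ℝ E] [FiniteDimensional ℝ E]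
    (f : E → ℝ) (f' : E → E)
    (hconv : ConvexOn ℝ Set.univ f)
    (hgrad : ∀ A : E, HasGradientAt f (f' A) A)
    -- `nr` is a norm on `E` (playing the role of the nuclear norm)
    (nr : E → ℝ)
    (hnr_def : ∀ x, nr x = 0 → x = 0)
    (hnr_add : ∀ x y, nr (x + y) ≤ nr x + nr y)
    (hnr_smul : ∀ (c : ℝ) (x : E), nr (c • x) = |c| * nr x)
    -- `ns` is a norm on `E` (with respect to which `f` is smooth)
    (ns : E → ℝ)
    (hns_add : ∀ x y, ns (x + y) ≤ ns x + ns y)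
    (hns_smul : ∀ (c : ℝ) (x : E), ns (c • x) = |c| * ns x)
    (μ L κ R : ℝ) (hL : 0 < L)
    -- the objective function φ
    (φ : E → ℝ) (hφ : ∀ Y, φ Y = f Y + μ * nr Y)
    -- the smoothness assumption (Assumption 1)
    (hsmooth : ∀ A B : E, ∀ η : ℝ, 0 < η → η < 1 →
      f ((1 - η) • A + η • B) ≤ f A + η * ⟪B - A, f' A⟫ + L * η ^ 2 / 2 * ns (B - A) ^ 2)
    -- `ns` is bounded by `κ` on the `nr`-unit ball
    (hκbound : ∀ Z : E, nr Z ≤ 1 → ns Z ≤ κ)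
    -- the GCG iterates
    (X : ℕ → E) (Z : ℕ → E)
    -- (i) the linearized subproblem
    (hZ_feas : ∀ k : ℕ, 1 ≤ k → nr (Z k) ≤ 1)
    (hZ_opt : ∀ k : ℕ, 1 ≤ k → ∀ W : E, nr W ≤ 1 →
      ⟪Z k, f' (X (k - 1))⟫ ≤ ⟪W, f' (X (k - 1))⟫)
    -- (ii) the new iterate improves on the line-search upper bound `h_k`, with η_k = 2/(k+1)
    (hstep : ∀ k : ℕ, 1 ≤ k → ∀ θ : ℝ, 0 ≤ θ →
      φ (X k) ≤ f ((1 - 2 / ((k : ℝ) + 1)) • X (k - 1) + θ • Z k)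
        + μ * (1 - 2 / ((k : ℝ) + 1)) * nr (X (k - 1)) + μ * θ)
    -- (iii) uniform boundedness of the iterates
    (hbound : ∀ k : ℕ, ns (X k) ≤ R)
    -- the competitor `Xc`, the constant `C`, and the accuracy `ε`
    (Xc : E) (C : ℝ)
    (hC : C = max (L * (κ * nr Xc + R) ^ 2) (φ (X 1) - φ Xc))
    (ε : ℝ) (hε : 0 < ε)
    (k : ℕ) (hk : 1 ≤ k) (hkε : 2 * C / ε ≤ (k : ℝ)) :
    φ (X k) - φ Xc ≤ ε := by
  let nrS : Seminorm ℝ E := .of nr hnr_add fun c x => by rw [hnr_smul, Real.norm_eq_abs]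
  let nsS : Seminorm ℝ E := .of ns hns_add fun c x => by rw [hns_smul, Real.norm_eq_abs]
  have hC' : L * (κ * nr Xc + R) ^ 2 ≤ C := hC ▸ le_max_left _ _
  have hC0 : 0 ≤ C := (by positivity : 0 ≤ L * (κ * nr Xc + R) ^ 2).trans hC'
  -- `η_1 = 1` lies outside the range of `hsmooth`, hence the second term in `C`.
  have hrec : ∀ j : ℕ, 2 ≤ j → φ (X j) - φ Xc ≤
      (1 - 2 / ((j : ℝ) + 1)) * (φ (X (j - 1)) - φ Xc) + (2 / ((j : ℝ) + 1)) ^ 2 * C / 2 := by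
    intro j hj
    have hη0 : 0 < 2 / ((j : ℝ) + 1) := by positivity
    have hη1 : 2 / ((j : ℝ) + 1) < 1 := by
      rw [div_lt_one (by positivity)]; exact_mod_cast Nat.lt_succ_of_le hj
    refine (gcg_step_bound nrS nsS hnr_def hconv (hgrad _) hL.le hη0.le hφ
      (fun B => hsmooth _ B _ hη0 hη1) (hZ_opt j (by omega)) (hκbound _ (hZ_feas j (by omega)))
      (hbound _) (hstep j (by omega) _ (mul_nonneg hη0.le (apply_nonneg nrS Xc)))).trans ?_
    gcongr
    exact hC'
  have hrate := le_two_mul_div_of_frankWolfe_recursion (e := fun j => φ (X j) - φ Xc) hC0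
    (hC ▸ le_max_right _ _) hrec k hk
  have hkε' : 2 * C ≤ ε * k := (div_le_iff₀' hε).mp hkε
  calc φ (X k) - φ Xc ≤ 2 * C / ((k : ℝ) + 1) := hrate
    _ ≤ ε := by rw [div_le_iff₀ (by positivity)]; linarith

/-- **GCG gives an ε-approximate solution in O(1/ε) steps**: under the assumptions of
Theorem 1, with `C = max (L * (κ * nr Xc + R)^2) (φ (X 1) - φ Xc)`, for every `ε > 0`,
if `k ≥ 2 C / ε` then `φ (X k) - φ Xc ≤ ε`. -/
theorem gcg_eps_approximate
    {E : Type*} [NormedAddCommGroup E] [InnerProductSpace ℝ E] [FiniteDimensional ℝ E]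
    (f : E → ℝ) (f' : E → E)
    (hconv : ConvexOn ℝ Set.univ f)
    (hgrad : ∀ A : E, HasGradientAt f (f' A) A)
    -- `nr` is a norm on `E` (playing the role of the nuclear norm)
    (nr : E → ℝ)
    (hnr_nonneg : ∀ x, 0 ≤ nr x)
    (hnr_def : ∀ x, nr x = 0 → x = 0)
    (hnr_add : ∀ x y, nr (x + y) ≤ nr x + nr y)
    (hnr_smul : ∀ (c : ℝ) (x : E), nr (c • x) = |c| * nr x)
    -- `ns` is a norm on `E` (with respect to which `f` is smooth)
    (ns : E → ℝ)
    (hns_nonneg : ∀ x, 0 ≤ ns x)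
    (hns_def : ∀ x, ns x = 0 → x = 0)
    (hns_add : ∀ x y, ns (x + y) ≤ ns x + ns y)
    (hns_smul : ∀ (c : ℝ) (x : E), ns (c • x) = |c| * ns x)
    (μ L κ R : ℝ) (hμ : 0 < μ) (hL : 0 < L) (hκ : 0 < κ)
    -- the objective function φ
    (φ : E → ℝ) (hφ : ∀ Y, φ Y = f Y + μ * nr Y)
    -- the smoothness assumption (Assumption 1)
    (hsmooth : ∀ A B : E, ∀ η : ℝ, 0 < η → η < 1 →
      f ((1 - η) • A + η • B) ≤ f A + η * ⟪B - A, f' A⟫ + L * η ^ 2 / 2 * ns (B - A) ^ 2)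
    -- `ns` is bounded by `κ` on the `nr`-unit ball
    (hκbound : ∀ Z : E, nr Z ≤ 1 → ns Z ≤ κ)
    -- the GCG iterates
    (X : ℕ → E) (Z : ℕ → E)
    -- (i) the linearized subproblem
    (hZ_feas : ∀ k : ℕ, 1 ≤ k → nr (Z k) ≤ 1)
    (hZ_opt : ∀ k : ℕ, 1 ≤ k → ∀ W : E, nr W ≤ 1 →
      ⟪Z k, f' (X (k - 1))⟫ ≤ ⟪W, f' (X (k - 1))⟫)
    -- (ii) the new iterate improves on the line-search upper bound `h_k`, with η_k = 2/(k+1)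
    (hstep : ∀ k : ℕ, 1 ≤ k → ∀ θ : ℝ, 0 ≤ θ →
      φ (X k) ≤ f ((1 - 2 / ((k : ℝ) + 1)) • X (k - 1) + θ • Z k)
        + μ * (1 - 2 / ((k : ℝ) + 1)) * nr (X (k - 1)) + μ * θ)
    -- (iii) uniform boundedness of the iterates
    (hbound : ∀ k : ℕ, ns (X k) ≤ R)
    -- the competitor `Xc`, the constant `C`, and the accuracy `ε`
    (Xc : E) (C : ℝ)
    (hC : C = max (L * (κ * nr Xc + R) ^ 2) (φ (X 1) - φ Xc))
    (ε : ℝ) (hε : 0 < ε)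
    (k : ℕ) (hk : 1 ≤ k) (hkε : 2 * C / ε ≤ (k : ℝ)) :
    φ (X k) - φ Xc ≤ ε :=
  gcg_eps_approximate_general f f' hconv hgrad nr hnr_def hnr_add hnr_smul ns hns_add hns_smul μ L κ
    R hL φ hφ hsmooth hκbound X Z hZ_feas hZ_opt hstep hbound Xc C hC ε hε k hk hkε
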